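/- Let a > 0 and let u₀ : ℝ → ℂ be differentiable. Then the function u(t,x) = e^{-axt} · e^{-at²/2} · u₀(x + t) satisfies the heat equation for the generalized real Dirac operator, namely ∂u/∂t (t,x) = ∂u/∂x (t,x) − a·x·u(t,x) for all t ∈ ℝ and x ∈ ℝ, together with the initial condition u(0,x) = u₀(x) for all x ∈ ℝ. -/

import Mathlib

/-!
Write `u t x = g t x * u₀ (x + t)` with the Gaussian gauge factor
`g t x = exp (-a x t) exp (-a t² / 2)`. The transported profile `u₀ (x + t)` has equal
`t`- and `x`-derivatives, while `∂ₜ g = -a (x + t) g` and `∂ₓ g = -a t g` differ by exactly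
`-a x g`; the product rule then gives `∂ₜ u = ∂ₓ u - a x u`.
-/

open Complex

noncomputable def diracGauge (c : ℂ) (t x : ℝ) : ℂ :=
  cexp (-(c * x * t)) * cexp (-(c * t ^ 2 / 2))

lemma hasDerivAt_diracGauge_time (c : ℂ) (t x : ℝ) :
    HasDerivAt (fun t' : ℝ => diracGauge c t' x) (-(c * (x + t)) * diracGauge c t x) t := by
  have hlin : HasDerivAt (fun t' : ℝ => -(c * x * t')) (-(c * x)) t :=
    ((hasDerivAt_id' (t : ℂ)).const_mul (c * x) |>.fun_neg).comp_ofReal.congr_deriv (by ring)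
  have hquad : HasDerivAt (fun t' : ℝ => -(c * (t' : ℂ) ^ 2 / 2)) (-(c * t)) t :=
    ((hasDerivAt_pow 2 (t : ℂ)).const_mul c |>.div_const 2 |>.fun_neg).comp_ofReal.congr_deriv
      (by push_cast; ring)
  exact (hlin.cexp.fun_mul hquad.cexp).congr_deriv (by unfold diracGauge; ring)

lemma hasDerivAt_diracGauge_space (c : ℂ) (t x : ℝ) :
    HasDerivAt (fun x' : ℝ => diracGauge c t x') (-(c * t) * diracGauge c t x) x := by
  have hlin : HasDerivAt (fun x' : ℝ => -(c * x' * t)) (-(c * t)) x :=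
    ((hasDerivAt_id' (x : ℂ)).const_mul c |>.mul_const (t : ℂ) |>.fun_neg).comp_ofReal.congr_deriv
      (by ring)
  exact (hlin.cexp.mul_const _).congr_deriv (by unfold diracGauge; ring)

theorem real_dirac_heat (a : ℝ) (u₀ : ℝ → ℂ)
    (hu₀ : Differentiable ℝ u₀)
    (u : ℝ → ℝ → ℂ)
    (hu : ∀ t x, u t x =
      Complex.exp (-(a * x * t)) * Complex.exp (-(a * t ^ 2 / 2)) * u₀ (x + t)) :
    (∀ (t x : ℝ),
        deriv (fun t' : ℝ => u t' x) t =
          deriv (fun x' : ℝ => u t x') x - (a : ℂ) * (x : ℂ) * u t x) ∧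
    (∀ x : ℝ, u 0 x = u₀ x) := by
  obtain rfl : u = fun t x => diracGauge a t x * u₀ (x + t) := by
    funext t x; rw [hu, diracGauge]
  refine ⟨fun t x => ?_, fun x => by simp [diracGauge]⟩
  have hprofile := (hu₀ (x + t)).hasDerivAt
  beta_reduce
  rw [((hasDerivAt_diracGauge_time a t x).fun_mul (hprofile.comp_const_add x t)).deriv,
    ((hasDerivAt_diracGauge_space a t x).fun_mul (hprofile.comp_add_const x t)).deriv]
  ring
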